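/- arXiv:2203.05345 — 8 statements merged into one kernel-verified Lean document; each statement's English description precedes it below -/
import Mathlib

section
/- For any reduced group with action A, the subobject A^A (generated by all elements a^{a'} with a, a' ∈ A) is a perfect object, i.e. (A^A)^(A^A) = A^A. In particular, each generator a₁^{a₂} can be written as (a₁^{a₂−y})^(y^z) for arbitrary y, z in A, hence lies in (A^A)^(A^A). -/
/-- A reduced group with action: a (not necessarily abelian) additive group `G`
with a self-action `act g h` (written `g^h` in the paper) satisfying the group-action
axioms and the two reduced axioms. -/
structure RGwa (G : Type*) [AddGroup G] where
  act : G → G → G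
  act_add : ∀ g g' h, act (g + g') h = act g h + act g' h
  add_act : ∀ g h h', act g (h + h') = act (act g h) h'
  act_zero : ∀ g, act g 0 = g
  reduced_comm : ∀ x y z, y ≠ 0 → act x y + z = z + act x y
  reduced_act : ∀ x y z, act x (act y z) = act x y

/-- A pentaction of a reduced group with action `A`: a quintuple of functions
`(b·-, -·b, (-)^b, ^b(-), b^(-))` satisfying conditions 1–12 of the paper. -/
structure Pentaction {A : Type*} [AddGroup A] (R : RGwa A) where
  dotl : A → A                -- b · -
  dotr : A → A                -- - · b
  pw : A → A                  -- (-)^b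
  lpw : A → A                 -- ^b(-)
  bp : A → A                  -- b^(-)
  c1 : ∀ a a', dotl (a + a') = dotl a + dotl a'
  c1' : ∀ a a', dotr (a + a') = dotr a + dotr a'
  c2 : ∀ a a', pw (a + a') = pw a + pw a'
  c2' : ∀ a a', lpw (a + a') = lpw a + lpw a'
  c3 : ∀ a a', a' ≠ 0 → R.act (dotl a) a' = R.act a a'
  c3' : ∀ a a', a' ≠ 0 → R.act (dotr a) a' = R.act a a'
  c4 : ∀ a a', bp (a + a') = R.act (bp a) a' + bp a'
  c5 : ∀ a a', pw (R.act a (dotl a')) = R.act (pw a) a'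
  c5' : ∀ a a', lpw (R.act a (-(dotr a'))) = R.act (lpw a) (-a')
  c6 : ∀ a a', a' ≠ 0 → dotl (R.act a a') = R.act a a'
  c6' : ∀ a a', a' ≠ 0 → dotr (R.act a a') = R.act a a'
  c7 : ∀ a a', bp (R.act a a') = bp a
  c8 : (∃ a, pw a ≠ a) → ∀ a a', pw a + a' = a' + pw a
  c8' : (∃ a, lpw a ≠ a) → ∀ a a', lpw a + a' = a' + lpw a
  c9 : ∀ a a', R.act a (pw a') = R.act a a'
  c9' : ∀ a a', R.act a (lpw a') = R.act a a'
  c10 : ∀ a a', a' ≠ 0 → R.act a (bp a') = a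
  c11 : ∀ a, dotr (dotl a) = a ∧ dotl (dotr a) = a
  c12 : ∀ a, lpw (pw a) = a ∧ pw (lpw a) = a

/-- `A` is perfect: the subobject `A^A` generated by all elements `a^{a'}` is all of `A`.
(Note that the generating set is closed under the action, so the subobject generated
is just the additive subgroup generated.) -/
def RGwa.Perfect {A : Type*} [AddGroup A] (R : RGwa A) : Prop :=
  AddSubgroup.closure {x | ∃ a a', x = R.act a a'} = ⊤

/-- The weak stabilizer of `A` is zero: all elements of the forms
`b^{(b'^a)}`, `b^{(a^{b'})} − b^a` and `a^{(b+b')} − a^{(b'+b)}` vanish. -/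
def RGwa.wStZero {A : Type*} [AddGroup A] (R : RGwa A) : Prop :=
  ∀ (b b' : Pentaction R) (a : A),
    b.bp (b'.bp a) = 0 ∧
    b.bp (b'.pw a) - b.bp a = 0 ∧
    b'.pw (b.pw a) - b.pw (b'.pw a) = 0

/-- for any reduced group with action `A`, the subobject
`A^A` is perfect: `(A^A)^(A^A) = A^A`; moreover each generator `a₁^{a₂}`
equals `(a₁^{a₂ - y})^{(y^z)}` for arbitrary `y z`. -/
theorem pow_subobject_perfect {A : Type*} [AddGroup A] (R : RGwa A) :
    (AddSubgroup.closure {x | ∃ a ∈ AddSubgroup.closure {x | ∃ a a', x = R.act a a'},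
        ∃ a' ∈ AddSubgroup.closure {x | ∃ a a', x = R.act a a'}, x = R.act a a'}
      = AddSubgroup.closure {x | ∃ a a', x = R.act a a'}) ∧
    (∀ a₁ a₂ y z : A, R.act a₁ a₂ = R.act (R.act a₁ (a₂ - y)) (R.act y z)) := by
  have key : ∀ a₁ a₂ y z : A, R.act a₁ a₂ = R.act (R.act a₁ (a₂ - y)) (R.act y z) := by
    intro a₁ a₂ y z
    rw [R.reduced_act, ← R.add_act, sub_add_cancel]
  refine ⟨le_antisymm ?_ ?_, key⟩
  · exact AddSubgroup.closure_mono (fun x hx => by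
      obtain ⟨a, _, a', _, h⟩ := hx; exact ⟨a, a', h⟩)
  · rw [AddSubgroup.closure_le]
    rintro x ⟨a, a', rfl⟩
    apply AddSubgroup.subset_closure
    exact ⟨R.act a (a' - a'), AddSubgroup.subset_closure ⟨a, a' - a', rfl⟩,
      R.act a' 0, AddSubgroup.subset_closure ⟨a', 0, rfl⟩, by rw [← key]⟩
end

section
/- Let A be a reduced group with action. If the stabilizer St(A) = {ā ∈ A : a^{ā} = a for all a ∈ A} is zero, then A = 0. -/
/-- if the stabilizer `St(A) = {x | ∀ a, a^x = a}` is zero,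
then `A = 0`. -/
theorem st_zero_imp_trivial {A : Type*} [AddGroup A] (R : RGwa A)
    (hSt : ∀ x : A, (∀ a : A, R.act a x = a) → x = 0) :
    ∀ a : A, a = 0 := by
  have key : ∀ y z : A, R.act y z = y := by
    intro y z
    have h1 : R.act y z + -y = 0 := by
      apply hSt
      intro a
      have : R.act a (R.act y z + -y) = R.act (R.act a (R.act y z)) (-y) :=
        R.add_act a _ _
      rw [this, R.reduced_act, ← R.add_act, add_neg_cancel, R.act_zero]
    rw [← sub_eq_add_neg] at h1
    exact sub_eq_zero.mp h1
  intro a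
  apply hSt
  intro b
  exact key b a
end

section
/- If A is a perfect reduced group with action, then for every pentaction b of A and every a ∈ A, the dot-component satisfies b·a = a. -/
/-- if `A` is perfect, then the dot component of every
pentaction is the identity: `b·a = a`. -/
theorem pentaction_dotl_eq_id {A : Type*} [AddGroup A] (R : RGwa A)
    (hP : R.Perfect) (b : Pentaction R) (a : A) : b.dotl a = a := by
  by_cases h : ∃ a' : A, a' ≠ 0
  · obtain ⟨a', ha'⟩ := h
    have key : R.act (R.act a a') (-a') = a := by
      rw [← R.add_act, add_neg_cancel, R.act_zero]
    calc b.dotl a = b.dotl (R.act (R.act a a') (-a')) := by rw [key]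
      _ = R.act (R.act a a') (-a') := b.c6 _ _ (neg_ne_zero.mpr ha')
      _ = a := key
  · push_neg at h
    have h0 : b.dotl 0 = 0 := by
      have := b.c1 0 0
      simpa using this
    rw [h a, h0]
end

section
/- Let A be a perfect reduced group with action, and let b, b' be pentactions of A. Then (b^{b'})^a = (b^a)^{b'} for all a ∈ A, where b^{b'} denotes the action-composite pentaction whose last component is (b^{b'})^a := (b^{(b'·a)})^{b'}. -/
/-- if `A` is perfect, then `(b^{b'})^a = (b^a)^{b'}`, where
`(b^{b'})^a := (b^{(b'·a)})^{b'}`. -/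
theorem composite_bp_eq {A : Type*} [AddGroup A] (R : RGwa A)
    (hP : R.Perfect) (b b' : Pentaction R) (a : A) :
    b'.pw (b.bp (b'.dotl a)) = b'.pw (b.bp a) := by
  suffices h : b.bp (b'.dotl a) = b.bp a by rw [h]
  by_cases hx : ∃ x : A, x ≠ 0
  · obtain ⟨x, hx⟩ := hx
    calc b.bp (b'.dotl a) = b.bp (R.act (b'.dotl a) x) := (b.c7 _ _).symm
      _ = b.bp (R.act a x) := by rw [b'.c3 a x hx]
      _ = b.bp a := b.c7 _ _
  · push_neg at hx
    rw [hx (b'.dotl a), hx a]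
end

section
/- Let A be a reduced group with action. Then the weak stabilizer wSt(A) is contained in the stabilizer St(A); i.e., each element of the form b^{(b'^a)}, b^{(a^{b'})} − b^a, or a^{b+b'} − a^{b'+b} (for pentactions b, b' and a ∈ A) stabilizes every element of A under the action. -/
/-- the weak stabilizer is contained in the stabilizer: each
element `b^{(b'^a)}`, `b^{(a^{b'})} − b^a`, `a^{(b+b')} − a^{(b'+b)}`
stabilizes every element of `A`. -/
theorem wSt_subset_St {A : Type*} [AddGroup A] (R : RGwa A)
    (b b' : Pentaction R) (a x : A) :
    R.act x (b.bp (b'.bp a)) = x ∧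
    R.act x (b.bp (b'.pw a) - b.bp a) = x ∧
    R.act x (b'.pw (b.pw a) - b.pw (b'.pw a)) = x := by
  -- helper: act (act x v) (-v) = x
  have hneg : ∀ (x v : A), R.act (R.act x v) (-v) = x := by
    intro x v
    have h := R.add_act x v (-v)
    simpa [R.act_zero] using h.symm
  -- bp of zero is zero
  have bpz : ∀ (p : Pentaction R), p.bp 0 = 0 := by
    intro p
    have h := p.c4 0 0
    simp [R.act_zero] at h
    exact h
  refine ⟨?_, ?_, ?_⟩
  · by_cases h : b'.bp a = 0
    · rw [h, bpz, R.act_zero]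
    · exact b.c10 x _ h
  · by_cases ha : a = 0
    · have hpz : b'.pw 0 = 0 := by
        have h := b'.c2 0 0
        simpa using h.symm
      rw [ha, hpz, sub_self, R.act_zero]
    · have hpa : b'.pw a ≠ 0 := by
        intro h
        apply ha
        have := (b'.c12 a).1
        rw [h] at this
        have hlz : b'.lpw 0 = 0 := by
          have h2 := b'.c2' 0 0
          simpa using h2.symm
        rw [hlz] at this
        exact this.symm
      rw [sub_eq_add_neg, R.add_act, b.c10 x _ hpa]
      calc R.act x (-(b.bp a)) = R.act (R.act x (b.bp a)) (-(b.bp a)) := by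
              rw [b.c10 x a ha]
        _ = x := hneg x _
  · set v := b.pw (b'.pw a) with hv
    have h1 : R.act x (b'.pw (b.pw a)) = R.act x a := by
      rw [b'.c9, b.c9]
    have h2 : R.act x v = R.act x a := by
      rw [hv, b.c9, b'.c9]
    rw [sub_eq_add_neg, R.add_act, h1, ← h2, hneg]
end

section
/- Let A be a perfect reduced group with action and b, b' pentactions of A. Then the sum b + b', defined componentwise by (b+b')·a = b·(b'·a), a·(b+b') = (a·b)·b', a^{(b+b')} = (a^b)^{b'}, ^{(b+b')}a = ^b(^{b'}a), and (b+b')^a = b^a + b·(b'^a), is again a pentaction of A. -/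
lemma Pentaction.bp_zero {A : Type*} [AddGroup A] {R : RGwa A} (b : Pentaction R) :
    b.bp 0 = 0 := by
  have h := b.c4 0 0
  rw [add_zero, R.act_zero] at h
  exact add_eq_right.mp h.symm

/-- if `A` is perfect, the componentwise sum `b + b'` of two
pentactions is again a pentaction. -/
theorem sum_pentaction {A : Type*} [AddGroup A] (R : RGwa A)
    (hP : R.Perfect) (b b' : Pentaction R) :
    ∃ s : Pentaction R,
      (∀ a, s.dotl a = b.dotl (b'.dotl a)) ∧
      (∀ a, s.dotr a = b'.dotr (b.dotr a)) ∧
      (∀ a, s.pw a = b'.pw (b.pw a)) ∧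
      (∀ a, s.lpw a = b.lpw (b'.lpw a)) ∧
      (∀ a, s.bp a = b.bp a + b.dotl (b'.bp a)) := by
  refine ⟨{
    dotl := fun a => b.dotl (b'.dotl a)
    dotr := fun a => b'.dotr (b.dotr a)
    pw := fun a => b'.pw (b.pw a)
    lpw := fun a => b.lpw (b'.lpw a)
    bp := fun a => b.bp a + b.dotl (b'.bp a)
    c1 := fun a a' => by beta_reduce; rw [b'.c1, b.c1]
    c1' := fun a a' => by beta_reduce; rw [b.c1', b'.c1']
    c2 := fun a a' => by beta_reduce; rw [b.c2, b'.c2]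
    c2' := fun a a' => by beta_reduce; rw [b'.c2', b.c2']
    c3 := fun a a' h => by beta_reduce; rw [b.c3 _ _ h, b'.c3 _ _ h]
    c3' := fun a a' h => by beta_reduce; rw [b'.c3' _ _ h, b.c3' _ _ h]
    c4 := fun a a' => by
      beta_reduce
      have h : b.bp a' + b.dotl (R.act (b'.bp a) a')
          = R.act (b.dotl (b'.bp a)) a' + b.bp a' := by
        by_cases ha : a' = 0
        · subst ha
          simp [R.act_zero, b.bp_zero]
        · rw [b.c6 _ _ ha, b.c3 _ _ ha]
          exact (R.reduced_comm (b'.bp a) a' (b.bp a') ha).symm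
      show b.bp (a + a') + b.dotl (b'.bp (a + a'))
          = R.act (b.bp a + b.dotl (b'.bp a)) a' + (b.bp a' + b.dotl (b'.bp a'))
      rw [b.c4, b'.c4, b.c1, R.act_add]
      simp only [add_assoc]
      congr 1
      rw [← add_assoc, ← add_assoc, h]
    c5 := fun a a' => by beta_reduce; rw [b.c5, b'.c5]
    c5' := fun a a' => by beta_reduce; rw [b'.c5', b.c5']
    c6 := fun a a' h => by beta_reduce; rw [b'.c6 _ _ h, b.c6 _ _ h]
    c6' := fun a a' h => by beta_reduce; rw [b.c6' _ _ h, b'.c6' _ _ h]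
    c7 := fun a a' => by beta_reduce; rw [b.c7, b'.c7]
    c8 := fun hx a a' => by
      beta_reduce
      by_cases h' : ∃ x, b'.pw x ≠ x
      · exact b'.c8 h' (b.pw a) a'
      · push_neg at h'
        obtain ⟨x, hne⟩ := hx
        beta_reduce at hne
        rw [h'] at hne
        show b'.pw (b.pw a) + a' = a' + b'.pw (b.pw a)
        rw [h']
        exact b.c8 ⟨x, hne⟩ a a'
    c8' := fun hx a a' => by
      beta_reduce
      by_cases h' : ∃ x, b.lpw x ≠ x
      · exact b.c8' h' (b'.lpw a) a'
      · push_neg at h'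
        obtain ⟨x, hne⟩ := hx
        beta_reduce at hne
        rw [h'] at hne
        show b.lpw (b'.lpw a) + a' = a' + b.lpw (b'.lpw a)
        rw [h']
        exact b'.c8' ⟨x, hne⟩ a a'
    c9 := fun a a' => by beta_reduce; rw [b'.c9, b.c9]
    c9' := fun a a' => by beta_reduce; rw [b.c9', b'.c9']
    c10 := fun a a' h => by
      beta_reduce
      show R.act a (b.bp a' + b.dotl (b'.bp a')) = a
      rw [R.add_act, b.c10 _ _ h]
      have h1 : b.pw (R.act a (b.dotl (b'.bp a'))) = R.act (b.pw a) (b'.bp a') :=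
        b.c5 a (b'.bp a')
      rw [b'.c10 _ _ h] at h1
      have h2 := congrArg b.lpw h1
      rwa [(b.c12 _).1, (b.c12 _).1] at h2
    c11 := fun a => ⟨by show b'.dotr (b.dotr (b.dotl (b'.dotl a))) = a
                        rw [(b.c11 _).1, (b'.c11 _).1],
                    by show b.dotl (b'.dotl (b'.dotr (b.dotr a))) = a
                       rw [(b'.c11 _).2, (b.c11 _).2]⟩
    c12 := fun a => ⟨by show b.lpw (b'.lpw (b'.pw (b.pw a))) = a
                        rw [(b'.c12 _).1, (b.c12 _).1],
                    by show b'.pw (b.pw (b.lpw (b'.lpw a))) = a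
                       rw [(b.c12 _).2, (b'.c12 _).2]⟩
  }, fun _ => rfl, fun _ => rfl, fun _ => rfl, fun _ => rfl, fun _ => rfl⟩
end

section
/- Let A be a perfect reduced group with action and b, b' pentactions of A. Then the composite b^{b'}, defined by (b^{b'})·a = a, a·(b^{b'}) = a, a^{(b^{b'})} = a^b, ^{(b^{b'})}a = ^b a, and (b^{b'})^a = (b^{(b'·a)})^{b'}, is again a pentaction of A. -/
lemma dotl_eq_id {A : Type*} [AddGroup A] {R : RGwa A} (p : Pentaction R) (a : A) :
    p.dotl a = a := by
  by_cases h : ∃ t : A, t ≠ 0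
  · obtain ⟨t, ht⟩ := h
    have hx : a = R.act (R.act a t) (-t) := by
      rw [← R.add_act, add_neg_cancel, R.act_zero]
    rw [hx, p.c6 _ _ (neg_ne_zero.mpr ht)]
  · push_neg at h
    have h0 : p.dotl 0 = 0 := by
      have := p.c1 0 0
      rw [add_zero] at this
      exact (left_eq_add.mp this)
    rw [h a, h0]

lemma dotr_eq_id {A : Type*} [AddGroup A] {R : RGwa A} (p : Pentaction R) (a : A) :
    p.dotr a = a := by
  by_cases h : ∃ t : A, t ≠ 0
  · obtain ⟨t, ht⟩ := h
    have hx : a = R.act (R.act a t) (-t) := by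
      rw [← R.add_act, add_neg_cancel, R.act_zero]
    rw [hx, p.c6' _ _ (neg_ne_zero.mpr ht)]
  · push_neg at h
    have h0 : p.dotr 0 = 0 := by
      have := p.c1' 0 0
      rw [add_zero] at this
      exact (left_eq_add.mp this)
    rw [h a, h0]

/-- if `A` is perfect, the composite `b^{b'}` of two pentactions
(defined componentwise as in the paper) is again a pentaction. -/
theorem composite_pentaction {A : Type*} [AddGroup A] (R : RGwa A)
    (hP : R.Perfect) (b b' : Pentaction R) :
    ∃ c : Pentaction R,
      (∀ a, c.dotl a = a) ∧
      (∀ a, c.dotr a = a) ∧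
      (∀ a, c.pw a = b.pw a) ∧
      (∀ a, c.lpw a = b.lpw a) ∧
      (∀ a, c.bp a = b'.pw (b.bp (b'.dotl a))) := by
  refine ⟨{
    dotl := id
    dotr := id
    pw := b.pw
    lpw := b.lpw
    bp := fun a => b'.pw (b.bp (b'.dotl a))
    c1 := fun _ _ => rfl
    c1' := fun _ _ => rfl
    c2 := b.c2
    c2' := b.c2'
    c3 := fun _ _ _ => rfl
    c3' := fun _ _ _ => rfl
    c4 := by
      intro a a'
      simp only [dotl_eq_id]
      rw [b.c4, b'.c2]
      congr 1
      have := b'.c5 (b.bp a) a'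
      rwa [dotl_eq_id] at this
    c5 := by
      intro a a'
      have := b.c5 a a'
      rwa [dotl_eq_id] at this
    c5' := by
      intro a a'
      have := b.c5' a a'
      rwa [dotr_eq_id] at this
    c6 := fun _ _ _ => rfl
    c6' := fun _ _ _ => rfl
    c7 := by
      intro a a'
      simp only [dotl_eq_id]
      rw [b.c7]
    c8 := b.c8
    c8' := b.c8'
    c9 := b.c9
    c9' := b.c9'
    c10 := by
      intro a a' ha'
      simp only [dotl_eq_id]
      rw [b'.c9, b.c10 a _ ha']
    c11 := fun _ => ⟨rfl, rfl⟩
    c12 := b.c12 }, fun _ => rfl, fun _ => rfl, fun _ => rfl, fun _ => rfl, fun _ => rfl⟩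
end

section
/- Let A be a perfect reduced group with action with zero weak stabilizer. Then the set PA(A) of pentactions of A, with addition (b+b') and action b^{b'} defined componentwise as in the paper, zero element the trivial pentaction b₀, and negation −b given componentwise by (−b)·a = a·b, a·(−b) = b·a, a^{(−b)} = ^b a, ^{(−b)}a = a^b, (−b)^a = −((b^a)·b), is itself a reduced group with action. In particular addition in PA(A) is associative, b + (−b) = (−b) + b = b₀, the action axioms (b+b')^{b''} = b^{b''} + b'^{b''}, b^{(b'+b'')} = (b^{b'})^{b''}, b^{b₀} = b hold, and the reduced axioms b^{b'} + b'' = b'' + b^{b'} for b' ≠ b₀ and b^{(b'^{b''})} = b^{b'} hold. -/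
/-!
In every reduced group with action, an element whose action agrees with that of `a`, and which
agrees with `a` after acting by any nonzero element, is `a` itself: otherwise their difference
would be a nonzero element acting trivially. Conditions 3 and 5 put `b · a` and `a · b` in this
situation, so the dot maps of every pentaction are the identity, and by condition 12 a pentaction
is determined by its power map `(-)^b` and its map `b^(-)`. The values `b^a` act trivially by
condition 10, hence are central. The group laws of `PA(A)` then reduce to composition of maps and
additivity, and the only reduced axiom with content, `b^{b'} + b'' = b'' + b^{b'}`, comes down to
the centrality of `b^a` and to the commutation of the power maps `(-)^b`, which is the third kind
of element of the weak stabilizer.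
-/

namespace RGwa

variable {A : Type*} [AddGroup A] (R : RGwa A)

def ActsTrivially (u : A) : Prop := ∀ x, R.act x u = x

lemma act_zero_left (y : A) : R.act 0 y = 0 :=
  (AddMonoidHom.mk' (R.act · y) fun g g' => R.act_add g g' y).map_zero

lemma act_neg_left (g y : A) : R.act (-g) y = -R.act g y :=
  (AddMonoidHom.mk' (R.act · y) fun g g' => R.act_add g g' y).map_neg g

variable {R}

lemma ActsTrivially.add {u v : A} (hu : R.ActsTrivially u) (hv : R.ActsTrivially v) :
    R.ActsTrivially (u + v) := fun x => by rw [R.add_act, hu, hv]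

lemma ActsTrivially.neg {u : A} (hu : R.ActsTrivially u) : R.ActsTrivially (-u) := fun x => by
  conv_rhs => rw [← R.act_zero x, ← neg_add_cancel u, R.add_act, hu]

lemma ActsTrivially.addCommute {u : A} (hu : R.ActsTrivially u) (z : A) : AddCommute u z := by
  by_cases hu0 : u = 0
  · rw [hu0]; exact AddCommute.zero_left z
  · have h := R.reduced_comm u u z hu0
    rwa [hu u] at h

lemma eq_of_act_eq {a a' : A} (hact : ∀ z, R.act z a = R.act z a')
    (hnz : ∀ t, t ≠ 0 → R.act a t = R.act a' t) : a = a' := by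
  by_contra hne
  have hd : -a + a' ≠ 0 := fun h => hne (neg_add_eq_zero.mp h)
  have htriv : R.ActsTrivially (-a + a') := fun x => by
    rw [R.add_act, ← hact, ← R.add_act, neg_add_cancel, R.act_zero]
  exact hne (by rw [← htriv a, hnz _ hd, htriv])

end RGwa

namespace Pentaction

variable {A : Type*} [AddGroup A] {R : RGwa A} (b : Pentaction R)

@[simp] lemma lpw_pw (a : A) : b.lpw (b.pw a) = a := (b.c12 a).1

@[simp] lemma pw_lpw (a : A) : b.pw (b.lpw a) = a := (b.c12 a).2

lemma dotr_neg (a : A) : b.dotr (-a) = -b.dotr a :=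
  (AddMonoidHom.mk' b.dotr b.c1').map_neg a

lemma bp_zero_s17 : b.bp 0 = 0 := by
  have h := b.c4 0 0
  rw [add_zero, R.act_zero] at h
  exact left_eq_add.mp h

-- Condition 5 with `a' = y^y`, which condition 6 leaves fixed under `b · -`.
lemma pw_act (x y : A) : b.pw (R.act x y) = R.act (b.pw x) y := by
  by_cases hy : y = 0
  · rw [hy, R.act_zero, R.act_zero]
  · simpa only [b.c6 y y hy, R.reduced_act] using b.c5 x (R.act y y)

lemma lpw_act (x y : A) : b.lpw (R.act x y) = R.act (b.lpw x) y := by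
  by_cases hy : y = 0
  · rw [hy, R.act_zero, R.act_zero]
  · simpa only [b.dotr_neg, neg_neg, b.c6' y y hy, R.reduced_act] using b.c5' x (-R.act y y)

lemma act_dotl (z a : A) : R.act z (b.dotl a) = R.act z a := by
  simpa only [b.pw_act, b.pw_lpw] using b.c5 (b.lpw z) a

lemma act_dotr (z a : A) : R.act z (b.dotr a) = R.act z a := by
  simpa only [b.lpw_act, b.lpw_pw, ← b.dotr_neg, neg_neg] using b.c5' (b.pw z) (-a)

@[simp] lemma dotl_eq_self (a : A) : b.dotl a = a :=
  R.eq_of_act_eq (b.act_dotl · a) (b.c3 a)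

@[simp] lemma dotr_eq_self (a : A) : b.dotr a = a :=
  R.eq_of_act_eq (b.act_dotr · a) (b.c3' a)

lemma actsTrivially_bp (a : A) : R.ActsTrivially (b.bp a) := fun x => by
  by_cases ha : a = 0
  · rw [ha, b.bp_zero_s17, R.act_zero]
  · exact b.c10 x a ha

lemma actsTrivially_pw {u : A} (hu : R.ActsTrivially u) : R.ActsTrivially (b.pw u) :=
  fun x => by rw [b.c9, hu]

attribute [ext] Pentaction

lemma ext_of_pw_bp {b b' : Pentaction R} (hpw : b.pw = b'.pw) (hbp : b.bp = b'.bp) :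
    b = b' := by
  refine Pentaction.ext (funext fun a => by simp) (funext fun a => by simp) hpw ?_ hbp
  funext a
  conv_lhs => rw [← b'.pw_lpw a, ← hpw, b.lpw_pw]

instance : Zero (Pentaction R) where
  zero :=
    { dotl := id
      dotr := id
      pw := id
      lpw := id
      bp := fun _ => 0
      c1 := fun _ _ => rfl
      c1' := fun _ _ => rfl
      c2 := fun _ _ => rfl
      c2' := fun _ _ => rfl
      c3 := fun _ _ _ => rfl
      c3' := fun _ _ _ => rfl
      c4 := fun _ _ => by rw [R.act_zero_left, zero_add]
      c5 := fun _ _ => rfl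
      c5' := fun _ _ => rfl
      c6 := fun _ _ _ => rfl
      c6' := fun _ _ _ => rfl
      c7 := fun _ _ => rfl
      c8 := fun ⟨_, h⟩ => absurd rfl h
      c8' := fun ⟨_, h⟩ => absurd rfl h
      c9 := fun _ _ => rfl
      c9' := fun _ _ => rfl
      c10 := fun a _ _ => R.act_zero a
      c11 := fun _ => ⟨rfl, rfl⟩
      c12 := fun _ => ⟨rfl, rfl⟩ }

instance : Add (Pentaction R) where
  add b b' :=
    { dotl := fun a => b.dotl (b'.dotl a)
      dotr := fun a => b'.dotr (b.dotr a)
      pw := fun a => b'.pw (b.pw a)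
      lpw := fun a => b.lpw (b'.lpw a)
      bp := fun a => b.bp a + b.dotl (b'.bp a)
      c1 := fun a a' => by rw [b'.c1, b.c1]
      c1' := fun a a' => by rw [b.c1', b'.c1']
      c2 := fun a a' => by rw [b.c2, b'.c2]
      c2' := fun a a' => by rw [b'.c2', b.c2']
      c3 := fun a a' _ => by simp only [dotl_eq_self]
      c3' := fun a a' _ => by simp only [dotr_eq_self]
      c4 := fun a a' => by
        simp only [dotl_eq_self, b.c4, b'.c4, R.act_add, add_assoc,
          ((b.actsTrivially_bp a').addCommute _).left_comm]
      c5 := fun a a' => by simp only [dotl_eq_self, pw_act]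
      c5' := fun a a' => by simp only [dotr_eq_self, lpw_act]
      c6 := fun a a' _ => by simp only [dotl_eq_self]
      c6' := fun a a' _ => by simp only [dotr_eq_self]
      c7 := fun a a' => by simp only [dotl_eq_self, b.c7, b'.c7]
      c8 := fun ⟨x, hx⟩ a a' => by
        by_cases hb' : ∃ y, b'.pw y ≠ y
        · exact b'.c8 hb' _ _
        · push Not at hb'
          rw [hb'] at hx ⊢
          exact b.c8 ⟨x, hx⟩ a a'
      c8' := fun ⟨x, hx⟩ a a' => by
        by_cases hb : ∃ y, b.lpw y ≠ y
        · exact b.c8' hb _ _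
        · push Not at hb
          rw [hb] at hx ⊢
          exact b'.c8' ⟨x, hx⟩ a a'
      c9 := fun a a' => by rw [b'.c9, b.c9]
      c9' := fun a a' => by rw [b.c9', b'.c9']
      c10 := fun a a' _ => by
        rw [dotl_eq_self, ((b.actsTrivially_bp a').add (b'.actsTrivially_bp a')) a]
      c11 := fun a => by simp only [dotl_eq_self, dotr_eq_self, and_self]
      c12 := fun a => by simp only [lpw_pw, pw_lpw, and_self] }

instance : Neg (Pentaction R) where
  neg b :=
    { dotl := b.dotr
      dotr := b.dotl
      pw := b.lpw
      lpw := b.pw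
      bp := fun a => -b.dotr (b.bp a)
      c1 := b.c1'
      c1' := b.c1
      c2 := b.c2'
      c2' := b.c2
      c3 := b.c3'
      c3' := b.c3
      c4 := fun a a' => by
        rw [dotr_eq_self, dotr_eq_self, dotr_eq_self, b.c4, R.act_neg_left, neg_add_rev,
          ((b.actsTrivially_bp a').neg.addCommute _).eq]
      c5 := fun a a' => by simp only [dotr_eq_self, lpw_act]
      c5' := fun a a' => by simp only [dotl_eq_self, pw_act]
      c6 := fun a a' _ => by simp only [dotr_eq_self]
      c6' := fun a a' _ => by simp only [dotl_eq_self]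
      c7 := fun a a' => by rw [b.c7]
      c8 := b.c8'
      c8' := b.c8
      c9 := b.c9'
      c9' := b.c9
      c10 := fun a a' _ => by rw [dotr_eq_self, (b.actsTrivially_bp a').neg a]
      c11 := fun a => (b.c11 a).symm
      c12 := fun a => (b.c12 a).symm }

/-- The action `b^{b'}` of `PA(A)` on itself. -/
def act (b b' : Pentaction R) : Pentaction R where
  dotl := id
  dotr := id
  pw := b.pw
  lpw := b.lpw
  bp := fun a => b'.pw (b.bp (b'.dotl a))
  c1 := fun _ _ => rfl
  c1' := fun _ _ => rfl
  c2 := b.c2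
  c2' := b.c2'
  c3 := fun _ _ _ => rfl
  c3' := fun _ _ _ => rfl
  c4 := fun a a' => by simp only [dotl_eq_self, b.c4, b'.c2, b'.pw_act]
  c5 := fun a a' => b.pw_act a a'
  c5' := fun a a' => b.lpw_act a (-a')
  c6 := fun _ _ _ => rfl
  c6' := fun _ _ _ => rfl
  c7 := fun a a' => by simp only [dotl_eq_self, b.c7]
  c8 := b.c8
  c8' := b.c8'
  c9 := b.c9
  c9' := b.c9'
  c10 := fun a a' _ => b'.actsTrivially_pw (b.actsTrivially_bp _) a
  c11 := fun _ => ⟨rfl, rfl⟩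
  c12 := b.c12

@[simp] lemma add_pw (b b' : Pentaction R) (a : A) : (b + b').pw a = b'.pw (b.pw a) := rfl
@[simp] lemma add_bp (b b' : Pentaction R) (a : A) :
    (b + b').bp a = b.bp a + b.dotl (b'.bp a) := rfl
@[simp] lemma zero_pw (a : A) : (0 : Pentaction R).pw a = a := rfl
@[simp] lemma zero_bp (a : A) : (0 : Pentaction R).bp a = 0 := rfl
@[simp] lemma neg_pw (b : Pentaction R) (a : A) : (-b).pw a = b.lpw a := rfl
@[simp] lemma neg_bp (b : Pentaction R) (a : A) : (-b).bp a = -b.dotr (b.bp a) := rfl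
@[simp] lemma act_pw (b b' : Pentaction R) (a : A) : (b.act b').pw a = b.pw a := rfl
@[simp] lemma act_bp (b b' : Pentaction R) (a : A) :
    (b.act b').bp a = b'.pw (b.bp (b'.dotl a)) := rfl

instance : AddGroup (Pentaction R) where
  add_assoc b b' b'' := ext_of_pw_bp rfl (funext fun a => by simp [add_assoc])
  zero_add b := ext_of_pw_bp rfl (funext fun a => by simp)
  add_zero b := ext_of_pw_bp rfl (funext fun a => by simp)
  neg_add_cancel b := ext_of_pw_bp (funext fun a => by simp) (funext fun a => by simp)
  nsmul := nsmulRec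
  zsmul := zsmulRec

lemma pw_comm_of_wStZero (hW : R.wStZero) (b b' : Pentaction R) (a : A) :
    b'.pw (b.pw a) = b.pw (b'.pw a) :=
  sub_eq_zero.mp (hW b b' a).2.2

def rgwa (hW : R.wStZero) : RGwa (Pentaction R) where
  act := act
  act_add b b' b'' := ext_of_pw_bp rfl (funext fun a => by simp [c2])
  add_act b b' b'' := ext_of_pw_bp rfl (funext fun a => by simp)
  act_zero b := ext_of_pw_bp rfl (funext fun a => by simp)
  reduced_comm b b' b'' _ := ext_of_pw_bp (funext fun a => pw_comm_of_wStZero hW b b'' a)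
    (funext fun a => by
      simpa using ((b'.actsTrivially_pw (b.actsTrivially_bp a)).addCommute (b''.bp a)).eq)
  reduced_act b b' b'' := ext_of_pw_bp rfl (funext fun a => by simp)

end Pentaction

theorem PA_is_rgwa_general {A : Type*} [AddGroup A] (R : RGwa A)
    (hW : R.wStZero) :
    ∃ (add : Pentaction R → Pentaction R → Pentaction R)
      (neg : Pentaction R → Pentaction R)
      (zero : Pentaction R)
      (pact : Pentaction R → Pentaction R → Pentaction R),
      -- addition is defined componentwise as in the paper
      (∀ b b' a, (add b b').dotl a = b.dotl (b'.dotl a)) ∧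
      (∀ b b' a, (add b b').dotr a = b'.dotr (b.dotr a)) ∧
      (∀ b b' a, (add b b').pw a = b'.pw (b.pw a)) ∧
      (∀ b b' a, (add b b').lpw a = b.lpw (b'.lpw a)) ∧
      (∀ b b' a, (add b b').bp a = b.bp a + b.dotl (b'.bp a)) ∧
      -- the zero pentaction
      (∀ a, zero.dotl a = a) ∧ (∀ a, zero.dotr a = a) ∧
      (∀ a, zero.pw a = a) ∧ (∀ a, zero.lpw a = a) ∧ (∀ a, zero.bp a = 0) ∧
      -- negation is defined componentwise as in the paper
      (∀ b a, (neg b).dotl a = b.dotr a) ∧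
      (∀ b a, (neg b).dotr a = b.dotl a) ∧
      (∀ b a, (neg b).pw a = b.lpw a) ∧
      (∀ b a, (neg b).lpw a = b.pw a) ∧
      (∀ b a, (neg b).bp a = -(b.dotr (b.bp a))) ∧
      -- the action composite is defined componentwise as in the paper
      (∀ b b' a, (pact b b').dotl a = a) ∧
      (∀ b b' a, (pact b b').dotr a = a) ∧
      (∀ b b' a, (pact b b').pw a = b.pw a) ∧
      (∀ b b' a, (pact b b').lpw a = b.lpw a) ∧
      (∀ b b' a, (pact b b').bp a = b'.pw (b.bp (b'.dotl a))) ∧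
      -- group axioms
      (∀ b b' b'', add (add b b') b'' = add b (add b' b'')) ∧
      (∀ b, add b zero = b) ∧ (∀ b, add zero b = b) ∧
      (∀ b, add b (neg b) = zero) ∧ (∀ b, add (neg b) b = zero) ∧
      -- group-with-action axioms
      (∀ b b' b'', pact (add b b') b'' = add (pact b b'') (pact b' b'')) ∧
      (∀ b b' b'', pact b (add b' b'') = pact (pact b b') b'') ∧
      (∀ b, pact b zero = b) ∧
      -- reduced axioms
      (∀ b b' b'', b' ≠ zero → add (pact b b') b'' = add b'' (pact b b')) ∧
      (∀ b b' b'', pact b (pact b' b'') = pact b b') := by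
  let P := Pentaction.rgwa hW
  exact ⟨(· + ·), Neg.neg, 0, Pentaction.act,
    fun _ _ _ => rfl, fun _ _ _ => rfl, fun _ _ _ => rfl, fun _ _ _ => rfl, fun _ _ _ => rfl,
    fun _ => rfl, fun _ => rfl, fun _ => rfl, fun _ => rfl, fun _ => rfl,
    fun _ _ => rfl, fun _ _ => rfl, fun _ _ => rfl, fun _ _ => rfl, fun _ _ => rfl,
    fun _ _ _ => rfl, fun _ _ _ => rfl, fun _ _ _ => rfl, fun _ _ _ => rfl, fun _ _ _ => rfl,
    add_assoc, add_zero, zero_add, add_neg_cancel, neg_add_cancel,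
    P.act_add, P.add_act, P.act_zero, P.reduced_comm, P.reduced_act⟩

/-- if `A` is perfect with zero weak stabilizer, then the set
`PA(A)` of pentactions, with the operations defined componentwise as in the
paper, is itself a reduced group with action. -/
theorem PA_is_rgwa {A : Type*} [AddGroup A] (R : RGwa A)
    (hP : R.Perfect) (hW : R.wStZero) :
    ∃ (add : Pentaction R → Pentaction R → Pentaction R)
      (neg : Pentaction R → Pentaction R)
      (zero : Pentaction R)
      (pact : Pentaction R → Pentaction R → Pentaction R),
      -- addition is defined componentwise as in the paper
      (∀ b b' a, (add b b').dotl a = b.dotl (b'.dotl a)) ∧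
      (∀ b b' a, (add b b').dotr a = b'.dotr (b.dotr a)) ∧
      (∀ b b' a, (add b b').pw a = b'.pw (b.pw a)) ∧
      (∀ b b' a, (add b b').lpw a = b.lpw (b'.lpw a)) ∧
      (∀ b b' a, (add b b').bp a = b.bp a + b.dotl (b'.bp a)) ∧
      -- the zero pentaction
      (∀ a, zero.dotl a = a) ∧ (∀ a, zero.dotr a = a) ∧
      (∀ a, zero.pw a = a) ∧ (∀ a, zero.lpw a = a) ∧ (∀ a, zero.bp a = 0) ∧
      -- negation is defined componentwise as in the paper
      (∀ b a, (neg b).dotl a = b.dotr a) ∧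
      (∀ b a, (neg b).dotr a = b.dotl a) ∧
      (∀ b a, (neg b).pw a = b.lpw a) ∧
      (∀ b a, (neg b).lpw a = b.pw a) ∧
      (∀ b a, (neg b).bp a = -(b.dotr (b.bp a))) ∧
      -- the action composite is defined componentwise as in the paper
      (∀ b b' a, (pact b b').dotl a = a) ∧
      (∀ b b' a, (pact b b').dotr a = a) ∧
      (∀ b b' a, (pact b b').pw a = b.pw a) ∧
      (∀ b b' a, (pact b b').lpw a = b.lpw a) ∧
      (∀ b b' a, (pact b b').bp a = b'.pw (b.bp (b'.dotl a))) ∧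
      -- group axioms
      (∀ b b' b'', add (add b b') b'' = add b (add b' b'')) ∧
      (∀ b, add b zero = b) ∧ (∀ b, add zero b = b) ∧
      (∀ b, add b (neg b) = zero) ∧ (∀ b, add (neg b) b = zero) ∧
      -- group-with-action axioms
      (∀ b b' b'', pact (add b b') b'' = add (pact b b'') (pact b' b'')) ∧
      (∀ b b' b'', pact b (add b' b'') = pact (pact b b') b'') ∧
      (∀ b, pact b zero = b) ∧
      -- reduced axioms
      (∀ b b' b'', b' ≠ zero → add (pact b b') b'' = add b'' (pact b b')) ∧
      (∀ b b' b'', pact b (pact b' b'') = pact b b') :=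
  PA_is_rgwa_general R hW
end
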